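/- arXiv:1808.02769 — 2 statements merged into one kernel-verified Lean document; each statement's English description precedes it below -/
import Mathlib

section
/- Let $\alpha_1, \ldots, \alpha_k \in (\mathbb{Z}_{\geq 0})^n$ be multi-indices with $|\alpha_i| > 0$ for each $i$. Then $\alpha_1! \alpha_2! \cdots \alpha_k! \leq \frac{(\alpha_1 + \alpha_2 + \cdots + \alpha_k)!}{k!} \, n^k$. -/
/-!
Pick for every multi-index `αᵢ` a coordinate `g i` with `αᵢ (g i) ≠ 0`, and let `m j` be the number
of `i` with `g i = j`, so that `∑ m = k`. In column `j` at least `m j` of the summands `αᵢ j` are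
nonzero, which forces `(m j)! ∏ᵢ (αᵢ j)! ≤ (∑ᵢ αᵢ j)!`. On the other hand `k! / ∏ⱼ (m j)!` is a
multinomial coefficient, hence at most `n ^ k`. Multiplying the column bounds gives the claim.
-/

open Finset Nat

namespace Nat
variable {ι : Type*} {s t : Finset ι} {f : ι → ℕ}

theorem multinomial_le_card_pow (s : Finset ι) (f : ι → ℕ) :
    multinomial s f ≤ #s ^ ∑ i ∈ s, f i := by
  classical
  set g : ι → ℕ := fun i => if i ∈ s then f i else 0
  have hfg : ∀ i ∈ s, f i = g i := fun i hi => (if_pos hi).symm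
  have hg : g ∈ piAntidiag s (∑ i ∈ s, f i) := by
    refine mem_piAntidiag.2 ⟨(sum_congr rfl hfg).symm, fun i hi => ?_⟩
    by_contra his
    exact hi (if_neg his)
  have hpow := sum_pow_eq_sum_piAntidiag s (fun _ => (1 : ℕ)) (∑ i ∈ s, f i)
  simp only [sum_const, smul_eq_mul, mul_one, one_pow, prod_const_one] at hpow
  rw [multinomial_congr hfg, hpow]
  exact single_le_sum (fun _ _ => Nat.zero_le _) hg

theorem factorial_sum_le_prod_factorial_mul_card_pow (s : Finset ι) (f : ι → ℕ) :
    (∑ i ∈ s, f i)! ≤ (∏ i ∈ s, (f i)!) * #s ^ ∑ i ∈ s, f i := by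
  rw [← multinomial_spec]
  exact Nat.mul_le_mul_left _ (multinomial_le_card_pow s f)

theorem factorial_card_le_multinomial (hf : ∀ i ∈ s, f i ≠ 0) : (#s)! ≤ multinomial s f := by
  induction s using Finset.cons_induction with
  | empty => simp
  | cons a s ha ih =>
    have hcard : #s ≤ ∑ i ∈ s, f i := by
      simpa using card_nsmul_le_sum s f 1 fun i hi =>
        Nat.one_le_iff_ne_zero.2 (hf i (mem_cons_of_mem hi))
    have hchoose : #s + 1 ≤ (f a + ∑ i ∈ s, f i).choose (f a) := by
      rw [Nat.choose_symm_add]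
      calc #s + 1 ≤ (∑ i ∈ s, f i + 1).choose (∑ i ∈ s, f i) := by simpa using hcard
        _ ≤ _ := Nat.choose_le_choose _ (by have := hf a (mem_cons_self a s); omega)
    rw [card_cons, factorial_succ, multinomial_cons]
    exact Nat.mul_le_mul hchoose (ih fun i hi => hf i (mem_cons_of_mem hi))

theorem factorial_card_mul_prod_factorial_le_factorial_sum (hts : t ⊆ s)
    (hf : ∀ i ∈ t, f i ≠ 0) : (#t)! * ∏ i ∈ s, (f i)! ≤ (∑ i ∈ s, f i)! := by
  classical
  rw [← sum_sdiff hts, ← prod_sdiff hts]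
  calc (#t)! * ((∏ i ∈ s \ t, (f i)!) * ∏ i ∈ t, (f i)!)
      = (∏ i ∈ s \ t, (f i)!) * ((∏ i ∈ t, (f i)!) * (#t)!) := by ring
    _ ≤ (∑ i ∈ s \ t, f i)! * (∑ i ∈ t, f i)! := by
      rw [← multinomial_spec t f]
      gcongr
      · exact Nat.le_of_dvd (factorial_pos _) (prod_factorial_dvd_factorial_sum _ _)
      · exact factorial_card_le_multinomial hf
    _ ≤ (∑ i ∈ s \ t, f i + ∑ i ∈ t, f i)! :=
      Nat.le_of_dvd (factorial_pos _) (factorial_mul_factorial_dvd_factorial_add _ _)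

end Nat

/-- For multi-indices `α₁,…,α_k ∈ (ℤ≥0)^n` with `|αᵢ| > 0` for each `i`,
`α₁! α₂! ⋯ α_k! ≤ (α₁+⋯+α_k)! / k! · n^k`, stated multiplicatively as
`k! · ∏ᵢ αᵢ! ≤ (∑ᵢ αᵢ)! · n^k`. -/
theorem multiindex_prod_factorial_le (n k : ℕ) (α : Fin k → (Fin n → ℕ))
    (hα : ∀ i, 0 < ∑ j, α i j) :
    k.factorial * ∏ i, ∏ j, (α i j).factorial
      ≤ (∏ j, (∑ i, α i j).factorial) * n ^ k := by
  choose g hg using fun i => exists_ne_zero_of_sum_ne_zero (hα i).ne'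
  set m : Fin n → ℕ := fun j => #{i | g i = j}
  have hm : ∑ j, m j = k := by
    simpa using (card_eq_sum_card_fiberwise (f := g) (s := univ) (t := univ) (by simp)).symm
  have hcol : ∀ j, (m j)! * ∏ i, (α i j)! ≤ (∑ i, α i j)! := fun j =>
    factorial_card_mul_prod_factorial_le_factorial_sum (subset_univ _)
      fun i hi => (mem_filter.1 hi).2 ▸ (hg i).2
  calc k ! * ∏ i, ∏ j, (α i j)!
      ≤ ((∏ j, (m j)!) * n ^ k) * ∏ j, ∏ i, (α i j)! := by
        rw [prod_comm]
        gcongr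
        simpa [hm] using factorial_sum_le_prod_factorial_mul_card_pow univ m
    _ = (∏ j, (m j)! * ∏ i, (α i j)!) * n ^ k := by rw [prod_mul_distrib]; ring
    _ ≤ (∏ j, (∑ i, α i j)!) * n ^ k := by gcongr with j; exact hcol j
end

section
/- Let $s > 2$ and $C \geq 1$. There exist constants $C', C'' > 0$ (depending only on $s$ and $C$) such that for all real $k \geq 1$ and all integers $N \geq 1$: $\sum_{m=1}^{N} \frac{C^m (m!)^{s}}{k^m} \leq C' \left( k + \frac{(C'')^N (N!)^{s}}{k^N} \right)$. -/
/-!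
Write `a_m = C^m (m!)^s / k^m`, so that `a_{m+1} = a_m · C (m+1)^s / k` with increasing ratios.
If `C (m+1)^s < k / 2`, all ratios up to `m` are below `1/2` and `a_m ≤ 2^{-m}`. Otherwise,
with `C` replaced by `2C` every ratio from `m` on is at least `1`, so `a_m` is dominated by the
last term `(2C)^N (N!)^s / k^N`. Summing, the `N` copies of that term are absorbed by `2^N`.
-/

open Real Finset

noncomputable def gevreyTerm (C s k : ℝ) (m : ℕ) : ℝ := C ^ m * (m.factorial : ℝ) ^ s / k ^ m

namespace gevreyTerm

variable {C s k : ℝ}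

lemma nonneg (hC : 0 ≤ C) (hk : 0 ≤ k) (m : ℕ) : 0 ≤ gevreyTerm C s k m := by
  unfold gevreyTerm; positivity

lemma mul_left (a : ℝ) (m : ℕ) : gevreyTerm (a * C) s k m = a ^ m * gevreyTerm C s k m := by
  simp only [gevreyTerm, mul_pow, mul_assoc, mul_div_assoc]

lemma succ (m : ℕ) :
    gevreyTerm C s k (m + 1) = gevreyTerm C s k m * (C * ((m + 1 : ℕ) : ℝ) ^ s / k) := by
  rw [gevreyTerm, gevreyTerm, Nat.factorial_succ, Nat.cast_mul,
    mul_rpow (Nat.cast_nonneg _) (Nat.cast_nonneg _), pow_succ, pow_succ]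
  ring

lemma le_pow (hs : 0 ≤ s) (hC : 0 ≤ C) (hk : 0 < k) (m : ℕ) :
    gevreyTerm C s k m ≤ (C * (m : ℝ) ^ s / k) ^ m := by
  induction m with
  | zero => simp [gevreyTerm]
  | succ m ih =>
    have hratio : C * (m : ℝ) ^ s / k ≤ C * ((m + 1 : ℕ) : ℝ) ^ s / k := by
      gcongr; exact_mod_cast m.le_succ
    rw [succ, pow_succ]
    gcongr
    exact ih.trans (pow_le_pow_left₀ (by positivity) hratio m)

lemma monotoneOn (hs : 0 ≤ s) (hC : 0 ≤ C) (hk : 0 < k) {m : ℕ}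
    (hkm : k ≤ C * ((m + 1 : ℕ) : ℝ) ^ s) : MonotoneOn (gevreyTerm C s k) {n | m ≤ n} :=
  monotoneOn_nat_Ici_of_le_succ fun n hmn => by
    have hratio : 1 ≤ C * ((n + 1 : ℕ) : ℝ) ^ s / k := by
      rw [one_le_div hk]
      exact hkm.trans (by gcongr)
    rw [succ]
    exact le_mul_of_one_le_right (nonneg hC hk.le n) hratio

lemma le_half_pow_add (hs : 0 ≤ s) (hC : 0 ≤ C) (hk : 0 < k) {m N : ℕ} (hmN : m ≤ N) :
    gevreyTerm C s k m ≤ (1 / 2) ^ m + gevreyTerm (2 * C) s k N := by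
  by_cases hkm : k ≤ 2 * C * ((m + 1 : ℕ) : ℝ) ^ s
  · calc gevreyTerm C s k m ≤ 2 ^ m * gevreyTerm C s k m :=
          le_mul_of_one_le_left (nonneg hC hk.le m) (one_le_pow₀ one_le_two)
      _ = gevreyTerm (2 * C) s k m := (mul_left 2 m).symm
      _ ≤ gevreyTerm (2 * C) s k N := monotoneOn hs (by positivity) hk hkm (le_refl m) hmN hmN
      _ ≤ (1 / 2) ^ m + gevreyTerm (2 * C) s k N := le_add_of_nonneg_left (by positivity)
  · have hratio : C * (m : ℝ) ^ s / k ≤ 1 / 2 := by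
      rw [div_le_iff₀ hk]
      calc C * (m : ℝ) ^ s ≤ C * ((m + 1 : ℕ) : ℝ) ^ s := by gcongr; exact_mod_cast m.le_succ
        _ ≤ 1 / 2 * k := by linarith
    calc gevreyTerm C s k m ≤ (C * (m : ℝ) ^ s / k) ^ m := le_pow hs hC hk m
      _ ≤ (1 / 2) ^ m := pow_le_pow_left₀ (by positivity) hratio m
      _ ≤ (1 / 2) ^ m + gevreyTerm (2 * C) s k N :=
          le_add_of_nonneg_right (nonneg (by positivity) hk.le N)

lemma sum_Icc_le (hs : 0 ≤ s) (hC : 0 ≤ C) (hk : 0 < k) (N : ℕ) :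
    ∑ m ∈ Icc 1 N, gevreyTerm C s k m ≤ 1 + N * gevreyTerm (2 * C) s k N := by
  have hgeom : ∑ m ∈ Icc 1 N, (1 / 2 : ℝ) ^ m ≤ 1 := by
    rw [← Ico_add_one_right_eq_Icc]
    exact (geom_sum_Ico_le_of_lt_one (by norm_num) (by norm_num)).trans_eq (by norm_num)
  calc ∑ m ∈ Icc 1 N, gevreyTerm C s k m
      ≤ ∑ m ∈ Icc 1 N, ((1 / 2) ^ m + gevreyTerm (2 * C) s k N) :=
        sum_le_sum fun m hm => le_half_pow_add hs hC hk (mem_Icc.1 hm).2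
    _ ≤ 1 + N * gevreyTerm (2 * C) s k N := by
        rw [sum_add_distrib, sum_const, Nat.card_Icc, nsmul_eq_mul, Nat.add_sub_cancel]
        gcongr

end gevreyTerm

/-- For `s > 2` and `C ≥ 1` there exist constants `C', C'' > 0` such that for all
`k ≥ 1` and all integers `N ≥ 1`:
`∑_{m=1}^N C^m (m!)^s / k^m ≤ C' (k + (C'')^N (N!)^s / k^N)`. -/
theorem sum_factorial_pow_le (s C : ℝ) (hs : 2 < s) (hC : 1 ≤ C) :
    ∃ C' > (0 : ℝ), ∃ C'' > (0 : ℝ), ∀ k : ℝ, 1 ≤ k → ∀ N : ℕ, 1 ≤ N →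
      ∑ m ∈ Finset.Icc 1 N, C ^ m * (m.factorial : ℝ) ^ s / k ^ m
        ≤ C' * (k + C'' ^ N * (N.factorial : ℝ) ^ s / k ^ N) := by
  refine ⟨1, one_pos, 4 * C, by positivity, fun k hk N _ => ?_⟩
  have hk0 : 0 < k := one_pos.trans_le hk
  have hN : (N : ℝ) ≤ 2 ^ N := by exact_mod_cast N.lt_two_pow_self.le
  calc ∑ m ∈ Icc 1 N, gevreyTerm C s k m
      ≤ 1 + N * gevreyTerm (2 * C) s k N := gevreyTerm.sum_Icc_le (by linarith) (by linarith) hk0 N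
    _ ≤ k + 2 ^ N * gevreyTerm (2 * C) s k N := by
        gcongr; exact gevreyTerm.nonneg (by linarith) hk0.le N
    _ = 1 * (k + gevreyTerm (4 * C) s k N) := by
        rw [one_mul, show 4 * C = 2 * (2 * C) by ring, gevreyTerm.mul_left (C := 2 * C)]
end
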